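/- arXiv:2012.12126 — 3 statements merged into one kernel-verified Lean document; each statement's English description precedes it below -/
import Mathlib

section
/- Let R be a bag over a finite attribute set X and S a bag over a finite attribute set Y, let Z = X ∩ Y, and assume R[Z] = S[Z]. Define a function T from (X ∪ Y)-tuples to the non-negative rationals by T(t) = R(t[X])·S(t[Y])/R(t[Z]) for every tuple t in the join Supp(R) ⋈ Supp(S), and T(t) = 0 otherwise. Then T is finitely supported and its marginals satisfy T[X] = R and T[Y] = S. -/
variable {A : Type} [DecidableEq A]

/-- The type of `X`-tuples: functions assigning to each attribute `a ∈ X` an element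
of its domain `D a`. -/
def Tup (D : A → Type) (X : Finset A) : Type := ∀ a : X, D a.1

/-- Restriction (projection) of an `X`-tuple to `Z ⊆ X`. -/
def Tup.restrict {D : A → Type} {X Z : Finset A} (h : Z ⊆ X) (t : Tup D X) : Tup D Z :=
  fun a => t ⟨a.1, h a.2⟩

/-- A bag over `X`: a finitely supported function from `X`-tuples to ℕ. -/
abbrev Bag (D : A → Type) (X : Finset A) : Type := Tup D X →₀ ℕ

/-- The marginal of a bag on `Z ⊆ X`. -/
noncomputable def Bag.marginal {D : A → Type} {X Z : Finset A} (h : Z ⊆ X) (R : Bag D X) :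
    Bag D Z := Finsupp.mapDomain (Tup.restrict h) R

/-- Two bags are consistent if a common bag over the union of schemas has them as marginals. -/
def Consistent {D : A → Type} {X Y : Finset A} (R : Bag D X) (S : Bag D Y) : Prop :=
  ∃ T : Bag D (X ∪ Y),
    Bag.marginal Finset.subset_union_left T = R ∧
    Bag.marginal Finset.subset_union_right T = S

open scoped NNRat

open scoped Classical

section Helpers
variable {D : A → Type} {X Y : Finset A}

noncomputable def glue (x : Tup D X) (y : Tup D Y) : Tup D (X ∪ Y) :=
  fun a => if h : a.1 ∈ X then x ⟨a.1, h⟩ else y ⟨a.1, (Finset.mem_union.mp a.2).resolve_left h⟩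

lemma glue_restrict_left (x : Tup D X) (y : Tup D Y) :
    Tup.restrict Finset.subset_union_left (glue x y) = x := by
  funext a
  simp [glue, Tup.restrict, a.2]

lemma glue_restrict_right (x : Tup D X) (y : Tup D Y)
    (hc : Tup.restrict Finset.inter_subset_left x = Tup.restrict Finset.inter_subset_right y) :
    Tup.restrict Finset.subset_union_right (glue x y) = y := by
  funext a
  by_cases h : a.1 ∈ X
  · have := congrFun hc ⟨a.1, Finset.mem_inter.mpr ⟨h, a.2⟩⟩
    simpa [glue, Tup.restrict, h] using this
  · simp [glue, Tup.restrict, h]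

lemma eq_glue (t : Tup D (X ∪ Y)) :
    t = glue (Tup.restrict Finset.subset_union_left t)
             (Tup.restrict Finset.subset_union_right t) := by
  funext a
  by_cases h : a.1 ∈ X <;> simp [glue, Tup.restrict, h]

lemma restrict_restrict_left (t : Tup D (X ∪ Y)) :
    Tup.restrict Finset.inter_subset_union t =
      Tup.restrict Finset.inter_subset_left (Tup.restrict Finset.subset_union_left t) := rfl

lemma restrict_restrict_right (t : Tup D (X ∪ Y)) :
    Tup.restrict Finset.inter_subset_union t =
      Tup.restrict Finset.inter_subset_right (Tup.restrict Finset.subset_union_right t) := rfl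

lemma mapDomain_apply_nat {α β : Type} (f : α → β) (R : α →₀ ℕ) (z : β) :
    Finsupp.mapDomain f R z = ∑ a ∈ R.support.filter (fun a => f a = z), R a := by
  classical
  rw [Finsupp.mapDomain, Finsupp.sum_apply, Finsupp.sum, Finset.sum_filter]
  exact Finset.sum_congr rfl fun a _ => by rw [Finsupp.single_apply]

end Helpers

/-- if `R[X ∩ Y] = S[X ∩ Y]`, then the function
`T(t) = R(t[X])·S(t[Y])/R(t[X ∩ Y])` on the join of the supports (and `0` elsewhere) is a
finitely supported non-negative rational valued function whose marginals are `R` and `S`. -/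
theorem stmt3 {D : A → Type} {X Y : Finset A} (R : Bag D X) (S : Bag D Y)
    (hZ : Bag.marginal Finset.inter_subset_left R = Bag.marginal Finset.inter_subset_right S)
    (T : Tup D (X ∪ Y) → ℚ≥0)
    (hT1 : ∀ t : Tup D (X ∪ Y),
      Tup.restrict Finset.subset_union_left t ∈ R.support →
      Tup.restrict Finset.subset_union_right t ∈ S.support →
      T t = (R (Tup.restrict Finset.subset_union_left t) : ℚ≥0) *
              (S (Tup.restrict Finset.subset_union_right t) : ℚ≥0) /
            ((Bag.marginal Finset.inter_subset_left R)
              (Tup.restrict Finset.inter_subset_union t) : ℚ≥0))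
    (hT0 : ∀ t : Tup D (X ∪ Y),
      (Tup.restrict Finset.subset_union_left t ∉ R.support ∨
       Tup.restrict Finset.subset_union_right t ∉ S.support) →
      T t = 0) :
    (Function.support T).Finite ∧
    (∀ x : Tup D X,
      ∑ᶠ t ∈ {t : Tup D (X ∪ Y) | Tup.restrict Finset.subset_union_left t = x}, T t
        = (R x : ℚ≥0)) ∧
    (∀ y : Tup D Y,
      ∑ᶠ t ∈ {t : Tup D (X ∪ Y) | Tup.restrict Finset.subset_union_right t = y}, T t
        = (S y : ℚ≥0)) := by
  classical
  -- membership in supports for nonzero T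
  have hsupp : ∀ t : Tup D (X ∪ Y), T t ≠ 0 →
      Tup.restrict Finset.subset_union_left t ∈ R.support ∧
      Tup.restrict Finset.subset_union_right t ∈ S.support := by
    intro t ht
    by_contra h
    rw [not_and_or] at h
    exact ht (hT0 t h)
  refine ⟨?_, ?_, ?_⟩
  · -- finiteness of support
    apply Set.Finite.subset
      (Finset.finite_toSet ((R.support ×ˢ S.support).image fun p => glue p.1 p.2))
    intro t ht
    obtain ⟨h1, h2⟩ := hsupp t ht
    refine Finset.mem_coe.mpr (Finset.mem_image.mpr ⟨⟨_, _⟩, Finset.mem_product.mpr ⟨h1, h2⟩, ?_⟩)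
    exact (eq_glue t).symm
  · -- X-marginal
    intro x
    by_cases hx : x ∈ R.support
    · have hxval : R x ≠ 0 := Finsupp.mem_support_iff.mp hx
      set M : ℕ :=
        Bag.marginal Finset.inter_subset_left R (Tup.restrict Finset.inter_subset_left x) with hMdef
      have hMeq : M = ∑ a ∈ R.support.filter
          (fun a => Tup.restrict (Finset.inter_subset_left : X ∩ Y ⊆ X) a =
            Tup.restrict Finset.inter_subset_left x), R a := by
        rw [hMdef, Bag.marginal, mapDomain_apply_nat]
      have hM : M ≠ 0 := by
        rw [hMeq]
        intro h0
        exact hxval (Finset.sum_eq_zero_iff.mp h0 x (Finset.mem_filter.mpr ⟨hx, rfl⟩))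
      set E : Finset (Tup D Y) := S.support.filter
        (fun y => Tup.restrict (Finset.inter_subset_right : X ∩ Y ⊆ Y) y =
          Tup.restrict Finset.inter_subset_left x) with hEdef
      have hglueE : ∀ y ∈ E, Tup.restrict Finset.subset_union_right (glue x y) = y := by
        intro y hy
        exact glue_restrict_right x y ((Finset.mem_filter.mp hy).2.symm)
      have hseteq : {t : Tup D (X ∪ Y) | Tup.restrict Finset.subset_union_left t = x}
            ∩ Function.support T
          = ↑(E.image (glue x)) ∩ Function.support T := by
        ext t
        simp only [Set.mem_inter_iff, Set.mem_setOf_eq, Finset.coe_image, Set.mem_image,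
          Finset.mem_coe, Function.mem_support]
        constructor
        · rintro ⟨htx, ht⟩
          obtain ⟨h1, h2⟩ := hsupp t ht
          refine ⟨⟨Tup.restrict Finset.subset_union_right t, ?_, ?_⟩, ht⟩
          · rw [hEdef, Finset.mem_filter]
            refine ⟨h2, ?_⟩
            rw [← restrict_restrict_right, restrict_restrict_left, htx]
          · rw [← htx]
            exact (eq_glue t).symm
        · rintro ⟨⟨y, _, rfl⟩, ht⟩
          exact ⟨glue_restrict_left x y, ht⟩
      rw [finsum_mem_eq_sum_of_inter_support_eq T hseteq]
      have hinj : Set.InjOn (glue x) (E : Set (Tup D Y)) := by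
        intro y1 h1 y2 h2 heq
        rw [← hglueE y1 h1, ← hglueE y2 h2, heq]
      rw [Finset.sum_image fun y hy z hz h => hinj hy hz h]
      have hterm : ∀ y ∈ E, T (glue x y) =
          (R x : ℚ≥0) * (S y : ℚ≥0) / (M : ℚ≥0) := by
        intro y hy
        have h2 : y ∈ S.support := (Finset.mem_filter.mp hy).1
        have hl := glue_restrict_left x y
        have hr := hglueE y hy
        rw [hT1 (glue x y) (by rwa [hl]) (by rwa [hr]), hl, hr,
          restrict_restrict_left, hl, ← hMdef]
      rw [Finset.sum_congr rfl hterm]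
      have hSsum : ∑ y ∈ E, (S y : ℚ≥0) = (M : ℚ≥0) := by
        rw [← Nat.cast_sum]
        congr 1
        have : ∑ y ∈ E, S y =
            Bag.marginal Finset.inter_subset_right S
              (Tup.restrict Finset.inter_subset_left x) := by
          rw [Bag.marginal, mapDomain_apply_nat, hEdef]
        rw [this, ← hZ, hMdef]
      have hMne : (M : ℚ≥0) ≠ 0 := Nat.cast_ne_zero.mpr hM
      calc ∑ y ∈ E, (R x : ℚ≥0) * (S y : ℚ≥0) / (M : ℚ≥0)
          = (R x : ℚ≥0) * (∑ y ∈ E, (S y : ℚ≥0)) / (M : ℚ≥0) := by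
            rw [Finset.mul_sum, Finset.sum_div]
        _ = (R x : ℚ≥0) := by rw [hSsum, mul_div_assoc, div_self hMne, mul_one]
    · -- R x = 0 case
      have hxval : R x = 0 := of_not_not (fun h => hx (Finsupp.mem_support_iff.mpr h))
      rw [hxval, Nat.cast_zero]
      apply finsum_mem_of_eqOn_zero
      intro t ht
      exact hT0 t (Or.inl (by rwa [Set.mem_setOf_eq.mp ht]))
  · -- Y-marginal
    intro y
    by_cases hy : y ∈ S.support
    · have hyval : S y ≠ 0 := Finsupp.mem_support_iff.mp hy
      set M : ℕ :=
        Bag.marginal Finset.inter_subset_left R (Tup.restrict Finset.inter_subset_right y)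
          with hMdef
      have hMS : M = Bag.marginal (Finset.inter_subset_right : X ∩ Y ⊆ Y) S
          (Tup.restrict (Finset.inter_subset_right : X ∩ Y ⊆ Y) y) := by rw [hMdef, hZ]
      have hM : M ≠ 0 := by
        rw [hMS, Bag.marginal, mapDomain_apply_nat]
        intro h0
        exact hyval (Finset.sum_eq_zero_iff.mp h0 y (Finset.mem_filter.mpr ⟨hy, rfl⟩))
      set E : Finset (Tup D X) := R.support.filter
        (fun x => Tup.restrict (Finset.inter_subset_left : X ∩ Y ⊆ X) x =
          Tup.restrict Finset.inter_subset_right y) with hEdef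
      have hglueE : ∀ x ∈ E, Tup.restrict Finset.subset_union_right (glue x y) = y := by
        intro x hx
        exact glue_restrict_right x y (Finset.mem_filter.mp hx).2
      have hseteq : {t : Tup D (X ∪ Y) | Tup.restrict Finset.subset_union_right t = y}
            ∩ Function.support T
          = ↑(E.image (fun x => glue x y)) ∩ Function.support T := by
        ext t
        simp only [Set.mem_inter_iff, Set.mem_setOf_eq, Finset.coe_image, Set.mem_image,
          Finset.mem_coe, Function.mem_support]
        constructor
        · rintro ⟨hty, ht⟩
          obtain ⟨h1, h2⟩ := hsupp t ht
          refine ⟨⟨Tup.restrict Finset.subset_union_left t, ?_, ?_⟩, ht⟩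
          · rw [hEdef, Finset.mem_filter]
            refine ⟨h1, ?_⟩
            rw [← restrict_restrict_left, restrict_restrict_right, hty]
          · rw [← hty]
            exact (eq_glue t).symm
        · rintro ⟨⟨x, _, rfl⟩, ht⟩
          exact ⟨hglueE x (by assumption), ht⟩
      rw [finsum_mem_eq_sum_of_inter_support_eq T hseteq]
      have hinj : Set.InjOn (fun x => glue x y) (E : Set (Tup D X)) := by
        intro x1 h1 x2 h2 heq
        rw [← glue_restrict_left x1 y, ← glue_restrict_left x2 y]
        simp only at heq
        rw [heq]
      rw [Finset.sum_image fun a ha b hb h => hinj ha hb h]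
      have hterm : ∀ x ∈ E, T (glue x y) =
          (R x : ℚ≥0) * (S y : ℚ≥0) / (M : ℚ≥0) := by
        intro x hx
        have h1 : x ∈ R.support := (Finset.mem_filter.mp hx).1
        have hl := glue_restrict_left x y
        have hr := hglueE x hx
        rw [hT1 (glue x y) (by rwa [hl]) (by rwa [hr]), hl, hr,
          restrict_restrict_right, hr, ← hMdef]
      rw [Finset.sum_congr rfl hterm]
      have hRsum : ∑ x ∈ E, (R x : ℚ≥0) = (M : ℚ≥0) := by
        rw [← Nat.cast_sum]
        congr 1
        rw [hMdef, Bag.marginal, mapDomain_apply_nat, hEdef]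
      have hMne : (M : ℚ≥0) ≠ 0 := Nat.cast_ne_zero.mpr hM
      calc ∑ x ∈ E, (R x : ℚ≥0) * (S y : ℚ≥0) / (M : ℚ≥0)
          = (∑ x ∈ E, (R x : ℚ≥0)) * (S y : ℚ≥0) / (M : ℚ≥0) := by
            rw [Finset.sum_mul, Finset.sum_div]
        _ = (S y : ℚ≥0) := by
            rw [hRsum, mul_comm, mul_div_assoc, div_self hMne, mul_one]
    · have hyval : S y = 0 := of_not_not (fun h => hy (Finsupp.mem_support_iff.mpr h))
      rw [hyval, Nat.cast_zero]
      apply finsum_mem_of_eqOn_zero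
      intro t ht
      exact hT0 t (Or.inr (by rwa [Set.mem_setOf_eq.mp ht]))
end

section
/- For every n ≥ 3, the hypergraph H_n, with vertices V_n = {A_1, …, A_n} (each with domain containing {0, 1, …, n−2}) and hyperedges V_n ∖ {A_i} for 1 ≤ i ≤ n, does not have the local-to-global consistency property for bags: there exists a pairwise consistent collection of bags over the hyperedges of H_n that is not globally consistent. -/
/-!
Let `G = ℤ/(n-1)` (here `Fin (m + 2)`) and let `R_i` be the bag containing once each tuple over
`V ∖ {A_i}` with entries in `G` whose entries sum to `c_i`, where `c_i = 1` for a single `i` and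
`c_i = 0` otherwise. For `i ≠ j` the bag of all tuples over `V` satisfying both sum constraints
witnesses the consistency of `R_i` and `R_j`: given the restriction to `V ∖ {A_i}`, the other
constraint determines the missing entry at `A_i`. A tuple `t` in the support of a global witness
would satisfy `∑_{a ≠ i} t_a = c_i` for every `i`; summing over `i` gives
`(n - 1) ∑_a t_a = 1`, impossible in `G`. Both properties transfer along the embeddings of `G`
into the domains.
-/

variable {A : Type} [DecidableEq A]

/-- Global consistency of a finite family of bags. -/
def GloballyConsistent {D : A → Type} {m : ℕ} (X : Fin m → Finset A)
    (R : ∀ i, Bag D (X i)) : Prop :=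
  ∃ T : Bag D (Finset.univ.sup X),
    ∀ i, Bag.marginal (Finset.le_sup (Finset.mem_univ i)) T = R i

open Finset

instance {D : A → Type} [∀ a, Fintype (D a)] {X : Finset A} : Fintype (Tup D X) :=
  inferInstanceAs (Fintype (∀ a : X, D a.1))

section Pushforward

variable {A : Type} {D E : A → Type}

namespace Tup

def map (e : ∀ a, E a ↪ D a) {X : Finset A} (t : Tup E X) : Tup D X := fun a => e a.1 (t a)

theorem map_injective (e : ∀ a, E a ↪ D a) (X : Finset A) :
    Function.Injective (map e (X := X)) :=
  fun _ _ h => funext fun a => (e a.1).injective (congrFun h a)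

theorem restrict_map (e : ∀ a, E a ↪ D a) {X Z : Finset A} (h : Z ⊆ X) :
    restrict h ∘ map e = map e ∘ restrict (D := E) h :=
  rfl

end Tup

namespace Bag

noncomputable def map (e : ∀ a, E a ↪ D a) {X : Finset A} (R : Bag E X) : Bag D X :=
  Finsupp.mapDomain (Tup.map e) R

theorem map_injective (e : ∀ a, E a ↪ D a) (X : Finset A) :
    Function.Injective (map e (X := X)) :=
  Finsupp.mapDomain_injective (Tup.map_injective e X)

theorem marginal_map (e : ∀ a, E a ↪ D a) {X Z : Finset A} (h : Z ⊆ X) (R : Bag E X) :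
    marginal h (R.map e) = (marginal h R).map e := by
  simp only [marginal, map, ← Finsupp.mapDomain_comp, Tup.restrict_map]

theorem restrict_mem_support_marginal {X Z : Finset A} (h : Z ⊆ X) {R : Bag D X}
    {t : Tup D X} (ht : t ∈ R.support) : Tup.restrict h t ∈ (marginal h R).support := by
  classical
  rw [marginal, Finsupp.mapDomain_support_of_subsingletonAddUnits]
  exact mem_image_of_mem _ ht

theorem marginal_marginal {X Y Z : Finset A} (hYX : Y ⊆ X) (hZY : Z ⊆ Y) (R : Bag D X) :
    marginal hZY (marginal hYX R) = marginal (hZY.trans hYX) R := by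
  simp only [marginal, ← Finsupp.mapDomain_comp]
  rfl

theorem marginal_self {X : Finset A} (R : Bag D X) : marginal (subset_refl X) R = R :=
  Finsupp.mapDomain_id

noncomputable def ofFinset {X : Finset A} (s : Finset (Tup D X)) : Bag D X :=
  ∑ t ∈ s, Finsupp.single t 1

theorem mem_support_ofFinset {X : Finset A} {s : Finset (Tup D X)} {t : Tup D X} :
    t ∈ (ofFinset s).support ↔ t ∈ s := by
  classical
  simp [ofFinset, Finsupp.finsetSum_apply, Finsupp.single_apply]

theorem marginal_ofFinset {X Z : Finset A} (h : Z ⊆ X) {s : Finset (Tup D X)}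
    {s' : Finset (Tup D Z)}
    (hs : Set.BijOn (Tup.restrict h) (s : Set (Tup D X)) (s' : Set (Tup D Z))) :
    marginal h (ofFinset s) = ofFinset s' := by
  simp only [marginal, ofFinset, Finsupp.mapDomain_finsetSum, Finsupp.mapDomain_single]
  exact sum_nbij _ hs.mapsTo hs.injOn hs.surjOn fun _ _ => rfl

end Bag

end Pushforward

section Transfer

variable {D E : A → Type}

theorem consistent_self {X : Finset A} (R : Bag D X) : Consistent R R :=
  ⟨Bag.marginal (union_self X).subset R, by rw [Bag.marginal_marginal, Bag.marginal_self],
    by rw [Bag.marginal_marginal, Bag.marginal_self]⟩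

theorem Consistent.map (e : ∀ a, E a ↪ D a) {X Y : Finset A} {R : Bag E X} {S : Bag E Y}
    (h : Consistent R S) : Consistent (R.map e) (S.map e) := by
  obtain ⟨T, hR, hS⟩ := h
  exact ⟨T.map e, by rw [Bag.marginal_map, hR], by rw [Bag.marginal_map, hS]⟩

theorem GloballyConsistent.exists_forall_restrict_mem_support {k : ℕ} {X : Fin k → Finset A}
    {R : ∀ i, Bag D (X i)} (h : GloballyConsistent X R) {i : Fin k} (hi : R i ≠ 0) :
    ∃ t : Tup D (univ.sup X), ∀ j, Tup.restrict (le_sup (mem_univ j)) t ∈ (R j).support := by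
  obtain ⟨T, hT⟩ := h
  obtain ⟨t, ht⟩ : T.support.Nonempty := by
    rw [Finsupp.support_nonempty_iff]
    rintro rfl
    exact hi (by rw [← hT i, Bag.marginal, Finsupp.mapDomain_zero])
  exact ⟨t, fun j => hT j ▸ Bag.restrict_mem_support_marginal _ ht⟩

theorem GloballyConsistent.of_map (e : ∀ a, E a ↪ D a) {k : ℕ} {X : Fin k → Finset A}
    {R : ∀ i, Bag E (X i)} (h : GloballyConsistent X fun i => (R i).map e) :
    GloballyConsistent X R := by
  classical
  obtain ⟨T, hT⟩ := h
  have hrange : (T.support : Set (Tup D (univ.sup X))) ⊆ Set.range (Tup.map e) := by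
    intro t ht
    have hcoord : ∀ a : ↥(univ.sup X), t a ∈ Set.range (e a.1) := by
      intro a
      obtain ⟨i, -, hai⟩ := mem_sup.1 a.2
      have hi := hT i ▸ Bag.restrict_mem_support_marginal (le_sup (mem_univ i)) ht
      obtain ⟨s, -, hs⟩ := mem_image.1 (Finsupp.mapDomain_support hi)
      exact ⟨s ⟨a, hai⟩, congrFun hs ⟨a, hai⟩⟩
    choose s hs using hcoord
    exact ⟨s, funext hs⟩
  refine ⟨Finsupp.comapDomain _ T (Tup.map_injective e _).injOn, fun i => ?_⟩
  apply Bag.map_injective e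
  rw [← Bag.marginal_map, Bag.map,
    Finsupp.mapDomain_comapDomain _ (Tup.map_injective e _) _ hrange]
  exact hT i

end Transfer

section SumBag

variable {G : Type} [AddCommGroup G]

namespace Tup

def extendByZero {X : Finset A} (t : Tup (fun _ => G) X) (a : A) : G :=
  if h : a ∈ X then t ⟨a, h⟩ else 0

def sum {X : Finset A} (t : Tup (fun _ => G) X) : G := ∑ a, t a

theorem extendByZero_restrict {X Z : Finset A} (h : Z ⊆ X) (t : Tup (fun _ => G) X) {a : A}
    (ha : a ∈ Z) : (restrict h t).extendByZero a = t.extendByZero a := by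
  simp only [extendByZero, dif_pos ha, dif_pos (h ha)]
  rfl

theorem eq_of_extendByZero_eq {X : Finset A} {t t' : Tup (fun _ => G) X}
    (h : ∀ a ∈ X, t.extendByZero a = t'.extendByZero a) : t = t' :=
  funext fun a => by simpa [extendByZero, a.2] using h a a.2

theorem sum_eq_sum_extendByZero (X : Finset A) (t : Tup (fun _ => G) X) :
    t.sum = ∑ a ∈ X, t.extendByZero a := by
  rw [← sum_coe_sort X]
  exact sum_congr rfl fun a _ => by rw [extendByZero, dif_pos a.2]

theorem sum_restrict {X Z : Finset A} (h : Z ⊆ X) (t : Tup (fun _ => G) X) :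
    (restrict h t).sum = ∑ a ∈ Z, t.extendByZero a := by
  rw [sum_eq_sum_extendByZero]
  exact sum_congr rfl fun a ha => extendByZero_restrict h t ha

end Tup

open Tup

theorem bijOn_restrict_sum {X Y W : Finset A} (hX : X ⊆ W) (hY : Y ⊆ W) {i : A}
    (hWX : W \ X = {i}) (hiY : i ∈ Y) (c d : G) :
    Set.BijOn (restrict hX)
      {t | (restrict hX t).sum = c ∧ (restrict hY t).sum = d} {s | s.sum = c} := by
  have hiX : i ∉ X := (mem_sdiff.1 (hWX ▸ mem_singleton_self i)).2
  have hYi : Y.erase i ⊆ X := fun a ha => by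
    by_contra haX
    have haWX : a ∈ W \ X := mem_sdiff.2 ⟨hY (mem_of_mem_erase ha), haX⟩
    rw [hWX, mem_singleton] at haWX
    exact ne_of_mem_erase ha haWX
  have hsumY : ∀ t : Tup (fun _ => G) W, (restrict hY t).sum =
      t.extendByZero i + ∑ a ∈ Y.erase i, (restrict hX t).extendByZero a := fun t => by
    rw [sum_restrict, ← add_sum_erase _ _ hiY]
    exact congrArg _ (sum_congr rfl fun a ha => (extendByZero_restrict hX t (hYi ha)).symm)
  refine ⟨fun t ht => ht.1, fun t ht t' ht' heq => ?_, fun s hs => ?_⟩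
  · refine eq_of_extendByZero_eq fun a ha => ?_
    by_cases haX : a ∈ X
    · rw [← extendByZero_restrict hX t haX, ← extendByZero_restrict hX t' haX, heq]
    · obtain rfl : a = i := by simpa [hWX] using mem_sdiff.2 ⟨ha, haX⟩
      have hd := ht.2.trans ht'.2.symm
      rw [hsumY, hsumY, heq] at hd
      exact add_right_cancel hd
  · let t : Tup (fun _ => G) W := fun a =>
      if h : a.1 ∈ X then s ⟨a.1, h⟩ else d - ∑ a ∈ Y.erase i, s.extendByZero a
    have hts : restrict hX t = s := funext fun a => dif_pos a.2
    refine ⟨t, ⟨hts ▸ hs, ?_⟩, hts⟩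
    rw [hsumY, hts]
    simp [t, extendByZero, hiX, hY hiY]

variable [Fintype G] [DecidableEq G]

noncomputable def sumBag (X : Finset A) (c : G) : Bag (fun _ => G) X :=
  Bag.ofFinset {t | t.sum = c}

theorem mem_support_sumBag {X : Finset A} {c : G} {t : Tup (fun _ => G) X} :
    t ∈ (sumBag X c).support ↔ t.sum = c := by
  simp only [sumBag, Bag.mem_support_ofFinset, mem_filter, mem_univ, true_and]

theorem sumBag_ne_zero {X : Finset A} (hX : X.Nonempty) (c : G) : sumBag X c ≠ 0 := by
  obtain ⟨a, ha⟩ := hX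
  intro h0
  have hsum : Tup.sum (X := X) (Pi.single ⟨a, ha⟩ c) = c := by simp [Tup.sum]
  have hmem := mem_support_sumBag.2 hsum
  rw [h0, Finsupp.support_zero] at hmem
  exact notMem_empty _ hmem

theorem consistent_sumBag {X Y : Finset A} {i j : A} (hYX : Y \ X = {i}) (hXY : X \ Y = {j})
    (c d : G) : Consistent (sumBag X c) (sumBag Y d) := by
  have hi : i ∈ Y := (mem_sdiff.1 (hYX ▸ mem_singleton_self i)).1
  have hj : j ∈ X := (mem_sdiff.1 (hXY ▸ mem_singleton_self j)).1
  refine ⟨Bag.ofFinset {t | (restrict subset_union_left t).sum = c ∧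
    (restrict subset_union_right t).sum = d}, Bag.marginal_ofFinset _ ?_,
    Bag.marginal_ofFinset _ ?_⟩
  · simpa using bijOn_restrict_sum subset_union_left subset_union_right
      (by rwa [union_sdiff_left]) hi c d
  · simpa [and_comm] using bijOn_restrict_sum subset_union_right subset_union_left
      (by rwa [union_sdiff_right]) hj d c

theorem not_globallyConsistent_sumBag {n : ℕ} (hG : ∀ x : G, (n + 1) • x = 0)
    (c : Fin (n + 2) → G) (hc : ∑ i, c i ≠ 0) :
    ¬ GloballyConsistent (fun i : Fin (n + 2) => univ.erase i)
      fun i => sumBag (univ.erase i) (c i) := by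
  intro h
  obtain ⟨t, ht⟩ :=
    h.exists_forall_restrict_mem_support (i := 0) (sumBag_ne_zero ⟨1, by simp⟩ _)
  have hsum : ∀ i, ∑ a ∈ univ.erase i, t.extendByZero a = c i :=
    fun i => (sum_restrict _ t).symm.trans (mem_support_sumBag.1 (ht i))
  refine hc ?_
  calc ∑ i, c i = ∑ i, (∑ a, t.extendByZero a - t.extendByZero i) := by
        simp_rw [← hsum, sum_erase_eq_sub (mem_univ _)]
    _ = (n + 1) • ∑ a, t.extendByZero a := by
        rw [sum_sub_distrib, sum_const, card_univ, Fintype.card_fin, succ_nsmul,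
          add_sub_cancel_right]
    _ = 0 := hG _

end SumBag

/-- for every `n ≥ 3`, the hypergraph `H_n` with vertices `V_n = {A_1, …, A_n}`
(each with domain containing `{0, 1, …, n-2}`) and hyperedges `V_n ∖ {A_i}` for `1 ≤ i ≤ n`
does not have the local-to-global consistency property for bags: some pairwise consistent
collection of bags over its hyperedges is not globally consistent.  (Here `n = m + 3`, so that
all `n ≥ 3` are covered; the vertices are the elements of `Fin (m+3)`, the hyperedges are the
complements of singletons, and `{0, …, n-2}` is represented by `Fin (m+2)`.) -/
theorem stmt8 (m : ℕ) (D : Fin (m + 3) → Type) (e : ∀ a : Fin (m + 3), Fin (m + 2) ↪ D a) :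
    ∃ R : ∀ i : Fin (m + 3), Bag D (Finset.univ.erase i),
      (∀ i j, Consistent (R i) (R j)) ∧
      ¬ GloballyConsistent (fun i : Fin (m + 3) => Finset.univ.erase i) R := by
  let c : Fin (m + 3) → Fin (m + 2) := Pi.single 0 1
  refine ⟨fun i => (sumBag (univ.erase i) (c i)).map e, fun i j => ?_, fun h => ?_⟩
  · obtain rfl | hij := eq_or_ne i j
    · exact consistent_self _
    · exact (consistent_sumBag (erase_sdiff_erase hij.symm (mem_univ i))
        (erase_sdiff_erase hij (mem_univ j)) _ _).map e
  · refine not_globallyConsistent_sumBag (n := m + 1) (fun x => ?_) c ?_ (h.of_map e)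
    · simpa using card_nsmul_eq_zero (x := x)
    · simp [c]
end

section
/- Let A be an attribute, fix a default value u_0 ∈ Dom(A), and let Y_1, …, Y_m be finite sets of attributes none of which contains A. Let S_1, …, S_m be bags over Y_1, …, Y_m, let J ⊆ [m], and set X_i = Y_i ∪ {A} for i ∈ J and X_i = Y_i for i ∉ J. Define bags R_1, …, R_m by: R_i = S_i for i ∉ J, and for i ∈ J, R_i(t) = S_i(t[Y_i]) if t(A) = u_0 and R_i(t) = 0 if t(A) ≠ u_0. Then for every subset I ⊆ [m], the collection {S_i : i ∈ I} is globally consistent if and only if the collection {R_i : i ∈ I} is globally consistent. -/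
variable {A : Type} [DecidableEq A]

/-- Global consistency of the subcollection of a family of bags indexed by `I`. -/
def GloballyConsistentOn {D : A → Type} {ι : Type} (I : Finset ι) (X : ι → Finset A)
    (R : ∀ i, Bag D (X i)) : Prop :=
  ∃ T : Bag D (I.sup X),
    ∀ i (hi : i ∈ I), Bag.marginal (Finset.le_sup hi) T = R i

set_option linter.unusedSectionVars false

omit [DecidableEq A] in
theorem Tup.restrict_restrict' {D : A → Type} {X Y Z : Finset A} (h1 : Z ⊆ Y) (h2 : Y ⊆ X)
    (t : Tup D X) : Tup.restrict h1 (Tup.restrict h2 t) = Tup.restrict (h1.trans h2) t := rfl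

def Tup.extend {D : A → Type} (A0 : A) (u0 : D A0) {W Z : Finset A}
    (hZ : Z ⊆ insert A0 W) (t : Tup D W) : Tup D Z :=
  fun a => if h : a.1 = A0 then cast (congrArg D h.symm) u0
  else t ⟨a.1, by have := hZ a.2; rw [Finset.mem_insert] at this; tauto⟩

theorem Tup.restrict_extend {D : A → Type} (A0 : A) (u0 : D A0) {W Z : Finset A}
    (hA : A0 ∉ W) (hW : W ⊆ Z) (hZ : Z ⊆ insert A0 W) (t : Tup D W) :
    Tup.restrict hW (Tup.extend A0 u0 hZ t) = t := by
  funext a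
  have hne : a.1 ≠ A0 := fun h => hA (h ▸ a.2)
  simp [Tup.restrict, Tup.extend, hne]

theorem Tup.extend_apply_A0 {D : A → Type} (A0 : A) (u0 : D A0) {W Z : Finset A}
    (hZ : Z ⊆ insert A0 W) (t : Tup D W) (hmem : A0 ∈ Z) :
    Tup.extend A0 u0 hZ t ⟨A0, hmem⟩ = u0 := by
  show dite _ _ _ = u0
  rw [dif_pos rfl]
  exact eq_of_heq (cast_heq _ _)

theorem Tup.extend_restrict {D : A → Type} (A0 : A) (u0 : D A0) {W Z : Finset A}
    (hW : W ⊆ Z) (hmem : A0 ∈ Z) (hZ : Z ⊆ insert A0 W) (s : Tup D Z)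
    (hs : s ⟨A0, hmem⟩ = u0) :
    Tup.extend A0 u0 hZ (Tup.restrict hW s) = s := by
  funext a
  by_cases h : a.1 = A0
  · have ha : a = ⟨A0, hmem⟩ := Subtype.ext h
    subst ha
    rw [Tup.extend_apply_A0, hs]
  · simp [Tup.extend, h, Tup.restrict]

/-- let `A0` be an attribute with a fixed default value `u0`, let
`Y 0, …, Y (m-1)` be schemas not containing `A0`, let `S i` be bags over the `Y i`, and let
`J ⊆ [m]`.  Put `X i = Y i ∪ {A0}` for `i ∈ J` and `X i = Y i` otherwise, and let `R i` be
the bag over `X i` obtained from `S i` by setting the `A0`-coordinate to `u0` (for `i ∈ J`;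
`R i = S i` for `i ∉ J`).  Then for every `I ⊆ [m]`, the collection `{S i : i ∈ I}` is
globally consistent iff `{R i : i ∈ I}` is globally consistent. -/
theorem stmt10 {D : A → Type} {m : ℕ} (A0 : A) (u0 : D A0)
    (Y : Fin m → Finset A) (hA : ∀ i, A0 ∉ Y i)
    (S : ∀ i, Bag D (Y i))
    (J : Finset (Fin m))
    (X : Fin m → Finset A)
    (hXJ : ∀ i ∈ J, X i = insert A0 (Y i))
    (hXnJ : ∀ i ∉ J, X i = Y i)
    (R : ∀ i, Bag D (X i))
    (hRnJ : ∀ i (h : i ∉ J), ∀ t : Tup D (X i),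
      R i t = S i (fun a => t ⟨a.1, by rw [hXnJ i h]; exact a.2⟩))
    (hRJ1 : ∀ i (_ : i ∈ J) (hmem : A0 ∈ X i) (hsub : Y i ⊆ X i), ∀ t : Tup D (X i),
      t ⟨A0, hmem⟩ = u0 → R i t = S i (Tup.restrict hsub t))
    (hRJ0 : ∀ i (_ : i ∈ J) (hmem : A0 ∈ X i), ∀ t : Tup D (X i),
      t ⟨A0, hmem⟩ ≠ u0 → R i t = 0) :
    ∀ I : Finset (Fin m),
      (GloballyConsistentOn I Y S ↔ GloballyConsistentOn I X R) := by
  intro I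
  have hYX : ∀ i, Y i ⊆ X i := by
    intro i
    by_cases h : i ∈ J
    · rw [hXJ i h]; exact Finset.subset_insert _ _
    · rw [hXnJ i h]
  have hXiY : ∀ i, X i ⊆ insert A0 (Y i) := by
    intro i
    by_cases h : i ∈ J
    · rw [hXJ i h]
    · rw [hXnJ i h]; exact Finset.subset_insert _ _
  have hXsub : ∀ i ∉ J, X i ⊆ Y i := fun i h => le_of_eq (hXnJ i h)
  have keyJ : ∀ i ∈ J, R i = Finsupp.mapDomain (Tup.extend A0 u0 (hXiY i)) (S i) := by
    intro i hi
    have hmem : A0 ∈ X i := by rw [hXJ i hi]; exact Finset.mem_insert_self _ _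
    have hinj : Function.Injective (Tup.extend A0 u0 (hXiY i)) := by
      intro t1 t2 h
      have h2 := congrArg (Tup.restrict (hYX i)) h
      rwa [Tup.restrict_extend A0 u0 (hA i), Tup.restrict_extend A0 u0 (hA i)] at h2
    ext t
    by_cases ht : t ⟨A0, hmem⟩ = u0
    · rw [hRJ1 i hi hmem (hYX i) t ht]
      conv_rhs => rw [← Tup.extend_restrict A0 u0 (hYX i) hmem (hXiY i) t ht]
      rw [Finsupp.mapDomain_apply hinj]
    · rw [hRJ0 i hi hmem t ht]
      rw [Finsupp.mapDomain_notin_range]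
      rintro ⟨s, rfl⟩
      exact ht (Tup.extend_apply_A0 A0 u0 (hXiY i) s hmem)
  have keynJ : ∀ i (h : i ∉ J),
      R i = Finsupp.mapDomain (Tup.restrict (hXsub i h)) (S i) := by
    intro i h
    have hinj : Function.Injective (Tup.restrict (hXsub i h) : Tup D (Y i) → Tup D (X i)) := by
      intro t1 t2 heq
      exact congrArg (Tup.restrict (hYX i)) heq
    ext t
    have ht : t = Tup.restrict (hXsub i h) (Tup.restrict (hYX i) t) := rfl
    conv_rhs => rw [ht]
    rw [Finsupp.mapDomain_apply hinj]
    exact hRnJ i h t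
  have marg : ∀ i, Bag.marginal (hYX i) (R i) = S i := by
    intro i
    by_cases hi : i ∈ J
    · rw [keyJ i hi]
      unfold Bag.marginal
      rw [← Finsupp.mapDomain_comp]
      have hid : Tup.restrict (hYX i) ∘ Tup.extend A0 u0 (hXiY i) = id := by
        funext t
        exact Tup.restrict_extend A0 u0 (hA i) _ _ t
      rw [hid, Finsupp.mapDomain_id]
    · rw [keynJ i hi]
      unfold Bag.marginal
      rw [← Finsupp.mapDomain_comp]
      have hid : (Tup.restrict (hYX i) ∘ Tup.restrict (hXsub i hi) :
          Tup D (Y i) → Tup D (Y i)) = id := rfl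
      rw [hid, Finsupp.mapDomain_id]
  constructor
  · rintro ⟨T, hT⟩
    have hA0W : A0 ∉ I.sup Y := by
      intro h
      rw [Finset.mem_sup] at h
      obtain ⟨i, _, h⟩ := h
      exact hA i h
    have hVW : I.sup X ⊆ insert A0 (I.sup Y) := by
      intro a ha
      rw [Finset.mem_sup] at ha
      obtain ⟨i, hiI, hai⟩ := ha
      have h2 := hXiY i hai
      rw [Finset.mem_insert] at h2 ⊢
      rcases h2 with h | h
      · exact Or.inl h
      · exact Or.inr (Finset.mem_sup.2 ⟨i, hiI, h⟩)
    refine ⟨Finsupp.mapDomain (Tup.extend A0 u0 hVW) T, ?_⟩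
    intro i hi
    have hS := hT i hi
    unfold Bag.marginal at hS ⊢
    rw [← Finsupp.mapDomain_comp]
    by_cases hiJ : i ∈ J
    · have hcomm : (Tup.restrict (Finset.le_sup hi) ∘ Tup.extend A0 u0 hVW :
          Tup D (I.sup Y) → Tup D (X i))
          = Tup.extend A0 u0 (hXiY i) ∘ Tup.restrict (Finset.le_sup hi) := rfl
      rw [hcomm, Finsupp.mapDomain_comp, hS, ← keyJ i hiJ]
    · have hcomm : (Tup.restrict (Finset.le_sup hi) ∘ Tup.extend A0 u0 hVW :
          Tup D (I.sup Y) → Tup D (X i))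
          = Tup.restrict (hXsub i hiJ) ∘ Tup.restrict (Finset.le_sup hi) := by
        funext t
        funext a
        have ha : a.1 ∈ Y i := hXsub i hiJ a.2
        have hne : a.1 ≠ A0 := fun h => hA i (h ▸ ha)
        show Tup.extend A0 u0 hVW t ⟨a.1, _⟩ = _
        simp [Tup.extend, hne, Tup.restrict]
      rw [hcomm, Finsupp.mapDomain_comp, hS, ← keynJ i hiJ]
  · rintro ⟨T, hT⟩
    have hWV : I.sup Y ⊆ I.sup X := Finset.sup_mono_fun (fun i _ => hYX i)
    refine ⟨Finsupp.mapDomain (Tup.restrict hWV) T, ?_⟩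
    intro i hi
    have hRi := hT i hi
    unfold Bag.marginal at hRi ⊢
    rw [← Finsupp.mapDomain_comp]
    have hcomm : (Tup.restrict (Finset.le_sup hi) ∘ Tup.restrict hWV :
        Tup D (I.sup X) → Tup D (Y i))
        = Tup.restrict (hYX i) ∘ Tup.restrict (Finset.le_sup hi) := rfl
    rw [hcomm, Finsupp.mapDomain_comp, hRi]
    have h3 := marg i
    unfold Bag.marginal at h3
    exact h3
end
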